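/- Under the stated finiteness conditions, every u ∈ M can be written uniquely as u = Σ_{n≥0} f^{(n)} u_n, where u_n ∈ M, e(u_n) = 0 for every n, and only finitely many u_n are nonzero. -/

import Mathlib

/-!
STATEMENT 1. Under the stated finiteness conditions, every `u ∈ M` can
be written uniquely as `u = Σ_{n≥0} f^{(n)} u_n`, where `u_n ∈ M`,
`e (u_n) = 0` for every `n`, and only finitely many `u_n` are nonzero.
-/

noncomputable section

/-- The base field `K = ℚ(v)`. -/
abbrev K : Type := RatFunc ℚ

/-- The indeterminate `v ∈ K`. -/
def vv : K := RatFunc.X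

/-- The quantum integer `[n]_v = (vⁿ - v⁻ⁿ)/(v - v⁻¹)`. -/
def qint (n : ℕ) : K := (vv ^ n - vv⁻¹ ^ n) / (vv - vv⁻¹)

/-- The quantum factorial `[n]_v! = [1]_v [2]_v ⋯ [n]_v`. -/
def qfact (n : ℕ) : K := ∏ i ∈ Finset.range n, qint (i + 1)

/-!
For `m` with `e m = 0`, the relation `e f = q f e + 1` gives
`e (fⁿ⁺¹ m) = (1 + q + ⋯ + qⁿ) fⁿ m`, so `eᵏ (fⁿ m)` vanishes for `k > n` and is a nonzero
multiple of `m` for `k = n`. Applying `eᴺ`, with `N` the top index, to an expansion of `0`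
therefore kills its top term: expansions are unique. For existence, the span `S` of all `fⁿ m`
with `e m = 0` satisfies `S ⊆ e S`; hence if `e u ∈ S` then `u - t ∈ ker e ⊆ S` for some
`t ∈ S`, and induction on `k` puts every `u` with `eᵏ u = 0` in `S`. The grading, with weights
bounded in the direction of `α`, makes every vector killed by a power of `e`. The coefficients
`1 / [n]_v!` play no role beyond being nonzero.
-/

open Finset

-- `qNat (v⁻¹ ^ 2) n = v ^ (1 - n) * [n]_v`
def qNat {R : Type*} [Semiring R] (q : R) (n : ℕ) : R := ∑ k ∈ range n, q ^ k

lemma qNat_succ {R : Type*} [Semiring R] (q : R) (n : ℕ) : qNat q (n + 1) = qNat q n + q ^ n :=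
  sum_range_succ _ _

lemma qNat_ne_zero_of_pow_ne_one {R : Type*} [Ring R] {q : R} {n : ℕ} (h : q ^ n ≠ 1) :
    qNat q n ≠ 0 := by
  intro h0
  apply h
  rw [← sub_eq_zero, ← geom_sum_mul, ← qNat, h0, zero_mul]

lemma Submodule.exists_finsupp_of_mem_iSup_map {ι R M N : Type*} [Semiring R]
    [AddCommMonoid M] [AddCommMonoid N] [Module R M] [Module R N]
    (p : Submodule R M) (φ : ι → M →ₗ[R] N) {x : N} (hx : x ∈ ⨆ i, p.map (φ i)) :
    ∃ w : ι →₀ M, (∀ i, w i ∈ p) ∧ x = w.sum fun i m => φ i m := by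
  classical
  induction hx using Submodule.iSup_induction' with
  | mem i x hx =>
    obtain ⟨m, hm, rfl⟩ := hx
    refine ⟨Finsupp.single i m, fun j => ?_, by simp⟩
    rw [Finsupp.single_apply]
    split_ifs
    exacts [hm, p.zero_mem]
  | zero => exact ⟨0, fun _ => p.zero_mem, by simp⟩
  | add x y _ _ hx hy =>
    obtain ⟨w₁, h₁, rfl⟩ := hx
    obtain ⟨w₂, h₂, rfl⟩ := hy
    exact ⟨w₁ + w₂, fun i => p.add_mem (h₁ i) (h₂ i),
      (Finsupp.sum_add_index' (by simp) (by simp)).symm⟩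

lemma exists_pow_apply_eq_zero_of_grading {R P M : Type*} [Semiring R] [AddMonoid P]
    [AddCommMonoid M] [Module R M] {α : P} (Mg : P → Submodule R M) (hM : ⨆ lam, Mg lam = ⊤)
    {e : Module.End R M} (he : ∀ lam : P, ∀ m ∈ Mg lam, e m ∈ Mg (lam + α))
    (hvan : ∀ lam : P, ∃ N : ℕ, ∀ n : ℕ, N ≤ n → Mg (lam + n • α) = ⊥) (u : M) :
    ∃ k : ℕ, (e ^ k) u = 0 := by
  have hpow (n : ℕ) : ∀ lam, ∀ m ∈ Mg lam, (e ^ n) m ∈ Mg (lam + n • α) := by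
    induction n with
    | zero => simp
    | succ n ih =>
      intro lam m hm
      rw [pow_succ', Module.End.mul_apply, succ_nsmul, ← add_assoc]
      exact he _ _ (ih lam m hm)
  have hu : u ∈ ⨆ lam, Mg lam := hM ▸ Submodule.mem_top
  induction hu using Submodule.iSup_induction' with
  | mem lam x hx =>
    obtain ⟨N, hN⟩ := hvan lam
    exact ⟨N, by simpa [hN N le_rfl] using hpow N lam x hx⟩
  | zero => exact ⟨0, map_zero _⟩
  | add x y _ _ hx hy =>
    obtain ⟨k, hk⟩ := hx
    obtain ⟨l, hl⟩ := hy
    refine ⟨max k l, ?_⟩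
    rw [map_add, Module.End.pow_map_zero_of_le (le_max_left k l) hk,
      Module.End.pow_map_zero_of_le (le_max_right k l) hl, add_zero]

namespace QBoson

variable {F M : Type*} [Field F] [AddCommGroup M] [Module F M] {e f : Module.End F M} {q : F}

lemma mul_pow_succ (hef : e * f = q • (f * e) + 1) (n : ℕ) :
    e * f ^ (n + 1) = q ^ (n + 1) • (f ^ (n + 1) * e) + qNat q (n + 1) • f ^ n := by
  induction n with
  | zero => simpa [qNat] using hef
  | succ n ih =>
    rw [pow_succ f (n + 1), ← mul_assoc, ih, add_mul, smul_mul_assoc, smul_mul_assoc, mul_assoc,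
      hef, mul_add, mul_one, mul_smul_comm, ← mul_assoc, ← pow_succ, smul_add, smul_smul,
      ← pow_succ, qNat_succ q (n + 1), add_smul]
    abel

lemma apply_pow_succ (hef : e * f = q • (f * e) + 1) {m : M} (hm : e m = 0) (n : ℕ) :
    e ((f ^ (n + 1)) m) = qNat q (n + 1) • (f ^ n) m := by
  simpa [hm] using congrArg (· m) (mul_pow_succ hef n)

lemma pow_apply_pow_of_lt (hef : e * f = q • (f * e) + 1) {m : M} (hm : e m = 0)
    {n k : ℕ} (hnk : n < k) : (e ^ k) ((f ^ n) m) = 0 := by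
  obtain ⟨k, rfl⟩ := Nat.exists_eq_add_of_lt hnk
  induction n generalizing k with
  | zero => simp [pow_succ, hm]
  | succ n ih =>
    rw [show n + 1 + k + 1 = n + k + 1 + 1 by omega, pow_succ, Module.End.mul_apply,
      apply_pow_succ hef hm, map_smul, ih k (by omega), smul_zero]

lemma pow_apply_pow_self (hef : e * f = q • (f * e) + 1) {m : M} (hm : e m = 0) (n : ℕ) :
    (e ^ n) ((f ^ n) m) = (∏ j ∈ range n, qNat q (j + 1)) • m := by
  induction n with
  | zero => simp
  | succ n ih =>
    rw [pow_succ, Module.End.mul_apply, apply_pow_succ hef hm, map_smul, ih, smul_smul,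
      prod_range_succ, mul_comm]

variable {c : ℕ → F}

lemma eq_zero_of_sum_eq_zero (hef : e * f = q • (f * e) + 1) (hq : ∀ n, qNat q (n + 1) ≠ 0)
    (hc : ∀ n, c n ≠ 0) {w : ℕ →₀ M} (hw : ∀ n, e (w n) = 0)
    (hsum : (w.sum fun n m => c n • (f ^ n) m) = 0) : w = 0 := by
  by_contra hne
  have hs : w.support.Nonempty := Finsupp.support_nonempty_iff.mpr hne
  set N := w.support.max' hs
  have hN : w N ≠ 0 := Finsupp.mem_support_iff.mp (w.support.max'_mem hs)
  have htop : (e ^ N) (w.sum fun n m => c n • (f ^ n) m) =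
      c N • (∏ j ∈ range N, qNat q (j + 1)) • w N := by
    rw [Finsupp.sum, map_sum, sum_eq_single N]
    · rw [map_smul, pow_apply_pow_self hef (hw N)]
    · intro n hn hnN
      rw [map_smul, pow_apply_pow_of_lt hef (hw n) ((w.support.le_max' n hn).lt_of_ne hnN),
        smul_zero]
    · exact fun h => absurd (w.support.max'_mem hs) h
  rw [hsum, map_zero, eq_comm, smul_eq_zero, smul_eq_zero, prod_eq_zero_iff] at htop
  rcases htop with h | ⟨j, -, h⟩ | h
  exacts [hc N h, hq j h, hN h]

variable (e f c) in
def expansionSpan : Submodule F M := ⨆ n, (LinearMap.ker e).map (c n • f ^ n)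

lemma pow_apply_mem_expansionSpan (hc : ∀ n, c n ≠ 0) {m : M} (hm : e m = 0) (n : ℕ) :
    (f ^ n) m ∈ expansionSpan e f c := by
  have hmem : (c n • f ^ n) m ∈ expansionSpan e f c :=
    Submodule.mem_iSup_of_mem n ⟨m, hm, rfl⟩
  simpa [smul_smul, inv_mul_cancel₀ (hc n)] using Submodule.smul_mem _ (c n)⁻¹ hmem

lemma expansionSpan_le_map (hef : e * f = q • (f * e) + 1) (hq : ∀ n, qNat q (n + 1) ≠ 0)
    (hc : ∀ n, c n ≠ 0) : expansionSpan e f c ≤ (expansionSpan e f c).map e := by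
  refine iSup_le fun n => ?_
  rintro _ ⟨m, hm, rfl⟩
  refine ⟨(c n * (qNat q (n + 1))⁻¹) • (f ^ (n + 1)) m,
    Submodule.smul_mem _ _ (pow_apply_mem_expansionSpan hc hm (n + 1)), ?_⟩
  rw [map_smul, apply_pow_succ hef hm, smul_smul, inv_mul_cancel_right₀ (hq n)]
  rfl

lemma ker_pow_le_expansionSpan (hef : e * f = q • (f * e) + 1) (hq : ∀ n, qNat q (n + 1) ≠ 0)
    (hc : ∀ n, c n ≠ 0) (k : ℕ) : LinearMap.ker (e ^ k) ≤ expansionSpan e f c := by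
  induction k with
  | zero =>
    rw [pow_zero, Module.End.one_eq_id, LinearMap.ker_id]
    exact bot_le
  | succ k ih =>
    intro u hu
    rw [LinearMap.mem_ker, pow_succ, Module.End.mul_apply] at hu
    obtain ⟨t, ht, het⟩ := expansionSpan_le_map hef hq hc (ih hu)
    have hut : e (u - t) = 0 := by rw [map_sub, het, sub_self]
    simpa using add_mem (pow_apply_mem_expansionSpan hc hut 0) ht

theorem existsUnique_expansion (hef : e * f = q • (f * e) + 1) (hq : ∀ n, qNat q (n + 1) ≠ 0)
    (hc : ∀ n, c n ≠ 0) {u : M} {k : ℕ} (hk : (e ^ k) u = 0) :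
    ∃! w : ℕ →₀ M, (∀ n, e (w n) = 0) ∧ u = w.sum fun n m => c n • (f ^ n) m := by
  obtain ⟨w, hw, hu⟩ := (LinearMap.ker e).exists_finsupp_of_mem_iSup_map _
    (ker_pow_le_expansionSpan hef hq hc k hk)
  simp only [LinearMap.smul_apply] at hu
  refine ⟨w, ⟨hw, hu⟩, fun w' ⟨hw', hu'⟩ => ?_⟩
  rw [← sub_eq_zero]
  refine eq_zero_of_sum_eq_zero hef hq hc
    (fun n => by simp [hw' n, LinearMap.mem_ker.mp (hw n)]) ?_
  rw [Finsupp.sum_sub_index (fun n a b => by simp [smul_sub]), ← hu', ← hu, sub_self]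

end QBoson

lemma vv_pow_ne_one {m : ℕ} (hm : m ≠ 0) : vv ^ m ≠ 1 := by
  intro h
  have h' : vv ^ m = algebraMap (Polynomial ℚ) K (Polynomial.X ^ m) := by
    simp [vv, RatFunc.algebraMap_X]
  have := congrArg RatFunc.intDegree h
  rw [h', RatFunc.intDegree_polynomial, Polynomial.natDegree_X_pow, RatFunc.intDegree_one] at this
  omega

lemma qNat_vv_ne_zero (n : ℕ) : qNat (vv⁻¹ ^ 2) (n + 1) ≠ 0 := by
  refine qNat_ne_zero_of_pow_ne_one ?_
  rw [← pow_mul, inv_pow, Ne, inv_eq_one]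
  exact vv_pow_ne_one (by omega)

lemma qint_ne_zero {n : ℕ} (hn : n ≠ 0) : qint n ≠ 0 := by
  have hnum {m : ℕ} (hm : m ≠ 0) : vv ^ m - vv⁻¹ ^ m ≠ 0 := by
    rw [sub_ne_zero, inv_pow, Ne, ← mul_eq_one_iff_eq_inv₀ (pow_ne_zero m RatFunc.X_ne_zero),
      ← pow_add]
    exact vv_pow_ne_one (by omega)
  exact div_ne_zero (hnum hn) (by simpa using hnum one_ne_zero)

lemma qfact_ne_zero (n : ℕ) : qfact n ≠ 0 :=
  prod_ne_zero_iff.mpr fun i _ => qint_ne_zero i.succ_ne_zero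

theorem unique_boson_expansion_general
    {P : Type*} [AddCommGroup P] [DecidableEq P] (α : P)
    {M : Type*} [AddCommGroup M] [Module K M]
    (Mg : P → Submodule K M) (hM : DirectSum.IsInternal Mg)
    (e f : Module.End K M)
    (hef : e * f = (vv⁻¹ ^ 2) • (f * e) + 1)
    (he : ∀ lam : P, ∀ m ∈ Mg lam, e m ∈ Mg (lam + α))
    (hvan : ∀ lam : P, ∃ N : ℕ, ∀ n : ℕ, N ≤ n → Mg (lam + n • α) = ⊥) :
    ∀ u : M, ∃! w : ℕ →₀ M,
      (∀ n, e (w n) = 0) ∧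
      u = w.sum fun n un => (qfact n)⁻¹ • (f ^ n) un := by
  intro u
  obtain ⟨k, hk⟩ := exists_pow_apply_eq_zero_of_grading Mg hM.submodule_iSup_eq_top he hvan u
  exact QBoson.existsUnique_expansion hef qNat_vv_ne_zero
    (fun n => inv_ne_zero (qfact_ne_zero n)) hk

theorem unique_boson_expansion
    {P : Type*} [AddCommGroup P] [DecidableEq P] (α : P) (hα : ∀ n : ℕ, 0 < n → n • α ≠ 0)
    {M : Type*} [AddCommGroup M] [Module K M]
    (Mg : P → Submodule K M) (hM : DirectSum.IsInternal Mg)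
    (e f : Module.End K M)
    (hef : e * f = (vv⁻¹ ^ 2) • (f * e) + 1)
    (he : ∀ lam : P, ∀ m ∈ Mg lam, e m ∈ Mg (lam + α))
    (hf : ∀ lam : P, ∀ m ∈ Mg lam, f m ∈ Mg (lam - α))
    (hfin : ∀ lam : P, FiniteDimensional K (Mg lam))
    (hvan : ∀ lam : P, ∃ N : ℕ, ∀ n : ℕ, N ≤ n → Mg (lam + n • α) = ⊥) :
    ∀ u : M, ∃! w : ℕ →₀ M,
      (∀ n, e (w n) = 0) ∧
      u = w.sum fun n un => (qfact n)⁻¹ • (f ^ n) un :=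
  unique_boson_expansion_general α Mg hM e f hef he hvan
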